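/- arXiv:2109.12444 — 2 statements merged into one kernel-verified Lean document; each statement's English description precedes it below -/
import Mathlib

section
/- Let L be a Lie hyperalgebra over a hyperfield F (with char(F/α*) ≠ 2) and n ≥ 1. Then the i-th derived subalgebra of the quotient Lie algebra satisfies (L/S_n*)^{(i)} = ⟨S_n*(h) : h ∈ L^{[i]}⟩ for all i ≥ 0, i.e., it is spanned by the classes of elements of L^{[i]}. -/
def ext2 {α : Type*} (f : α → α → Set α) (A B : Set α) : Set α :=
  ⋃ a ∈ A, ⋃ b ∈ B, f a b

def IsSemihypergroup {α : Type*} (f : α → α → Set α) : Prop :=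
  (∀ a b, (f a b).Nonempty) ∧ ∀ a b c, ext2 f (f a b) {c} = ext2 f {a} (f b c)

def IsHypergroup {α : Type*} (f : α → α → Set α) : Prop :=
  IsSemihypergroup f ∧ ∀ a, (⋃ b, f a b) = Set.univ ∧ (⋃ b, f b a) = Set.univ

structure LieHyperalgebra (F : Type*) (L : Type*) where
  fadd : F → F → Set F
  fmul : F → F → Set F
  fzero : F
  fone : F
  add : L → L → Set L
  smul : F → L → Set L
  zero : L
  bracket : L → L → Set L
  fadd_hypergroup : IsHypergroup fadd
  fmul_semihypergroup : IsSemihypergroup fmul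
  fmul_repro : ∀ a, a ≠ fzero → ∀ c, c ≠ fzero → (∃ b, c ∈ fmul a b) ∧ (∃ b, c ∈ fmul b a)
  fdistrib_left : ∀ a b c, (⋃ x ∈ fadd b c, fmul a x) = ext2 fadd (fmul a b) (fmul a c)
  fdistrib_right : ∀ a b c, (⋃ x ∈ fadd a b, fmul x c) = ext2 fadd (fmul a c) (fmul b c)
  add_hypergroup : IsHypergroup add
  smul_add : ∀ (a : F) (x y : L), (⋃ z ∈ add x y, smul a z) = ext2 add (smul a x) (smul a y)
  add_smul : ∀ (a b : F) (x : L), (⋃ c ∈ fadd a b, smul c x) = ext2 add (smul a x) (smul b x)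
  mul_smul : ∀ (a b : F) (x : L), (⋃ c ∈ fmul a b, smul c x) = ⋃ y ∈ smul b x, smul a y
  zero_smul : ∀ x, smul fzero x = {zero}
  one_smul : ∀ x, smul fone x = {x}
  bracket_bilin_left : ∀ (l1 l2 : F) (x1 x2 y : L),
    ext2 bracket (ext2 add (smul l1 x1) (smul l2 x2)) {y}
      = ext2 add (⋃ z ∈ bracket x1 y, smul l1 z) (⋃ z ∈ bracket x2 y, smul l2 z)
  bracket_bilin_right : ∀ (l1 l2 : F) (x y1 y2 : L),
    ext2 bracket {x} (ext2 add (smul l1 y1) (smul l2 y2))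
      = ext2 add (⋃ z ∈ bracket x y1, smul l1 z) (⋃ z ∈ bracket x y2, smul l2 z)
  bracket_refl : ∀ x, zero ∈ bracket x x
  jacobi : ∀ x y z, zero ∈ ext2 add
    (ext2 add (ext2 bracket {x} (bracket y z)) (ext2 bracket {y} (bracket z x)))
    (ext2 bracket {z} (bracket x y))

/-- Hypersum `A 0 + A 1 + ⋯ + A t` of finitely many sets w.r.t. a hyperoperation. -/
def hsumSet {α : Type*} (f : α → α → Set α) : ∀ {t : ℕ}, (Fin (t + 1) → Set α) → Set α
  | 0, A => A 0
  | _ + 1, A => ext2 f (A 0) (hsumSet f (A ∘ Fin.succ))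

/-- Hyperproduct `lam 0 · lam 1 ⋯ · lam q` of finitely many elements. -/
def hprod {α : Type*} (f : α → α → Set α) : ∀ {q : ℕ}, (Fin (q + 1) → α) → Set α
  | 0, lam => {lam 0}
  | _ + 1, lam => ext2 f {lam 0} (hprod f (lam ∘ Fin.succ))

/-- Formal hyperbracket expressions in `m` variables: arbitrary compositions of the
arguments using only the hyperbracket. -/
inductive BExpr : ℕ → Type
  | leaf {m : ℕ} : Fin m → BExpr m
  | br {m : ℕ} : BExpr m → BExpr m → BExpr m

namespace LieHyperalgebra

variable {F L : Type*} (H : LieHyperalgebra F L)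

def derivedSet : ℕ → Set L
  | 0 => Set.univ
  | i + 1 => ext2 H.bracket (derivedSet i) (derivedSet i)

/-- Evaluation of a hyperbracket expression on set-valued arguments. -/
def evalBExpr : ∀ {m : ℕ}, BExpr m → (Fin m → Set L) → Set L
  | _, .leaf j, g => g j
  | _, .br e₁ e₂, g => ext2 H.bracket (evalBExpr e₁ g) (evalBExpr e₂ g)

/-- The data occurring in the definition of the relation `𝒮ₙ`. -/
structure SData (n : ℕ) where
  t : ℕ
  σ : Equiv.Perm (Fin (t + 1))
  m : Fin (t + 1) → ℕ
  f : ∀ i, BExpr (m i + 1)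
  h : ∀ i, Fin (m i + 1) → L
  p : ∀ i, Fin (m i + 1) → ℕ
  q : ∀ i j, Fin (p i j + 1) → ℕ
  lam : ∀ i j k, Fin (q i j k + 1) → F
  σi : ∀ i, Equiv.Perm (Fin (m i + 1))
  σi_fix : ∀ i j, h i j ∉ H.derivedSet (n - 1) → σi i j = j
  σij : ∀ i j, Equiv.Perm (Fin (p i j + 1))
  σijk : ∀ i j k, Equiv.Perm (Fin (q i j k + 1))

namespace SData

variable {H} {n : ℕ} (d : SData H n)

/-- `g_{ij} = (Σ_k Π_r λ_{ijkr}) · h_{ij}`. -/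
def g (i : Fin (d.t + 1)) (j : Fin (d.m i + 1)) : Set L :=
  ⋃ c ∈ hsumSet H.fadd (fun k => hprod H.fmul (d.lam i j k)), H.smul c (d.h i j)

/-- `A_{ij} = Σ_k B_{ij σ_{ij}(k)}` with `B_{ijk} = Π_r λ_{ijk σ_{ijk}(r)}`. -/
def A (i : Fin (d.t + 1)) (j : Fin (d.m i + 1)) : Set F :=
  hsumSet H.fadd (fun k =>
    hprod H.fmul (fun r => d.lam i j (d.σij i j k) (d.σijk i j (d.σij i j k) r)))

/-- `g'_{ij} = A_{σ(i) σ_{σ(i)}(j)} · h_{σ(i) σ_{σ(i)}(j)}`. -/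
def g' (i : Fin (d.t + 1)) (j : Fin (d.m (d.σ i) + 1)) : Set L :=
  ⋃ c ∈ d.A (d.σ i) (d.σi (d.σ i) j), H.smul c (d.h (d.σ i) (d.σi (d.σ i) j))

/-- `Σ_i ℓ_i` where `ℓ_i = f_i(g_{i1},…,g_{im_i})`. -/
def lhs : Set L := hsumSet H.add (fun i => H.evalBExpr (d.f i) (d.g i))

/-- `Σ_i ℓ'_i` where `ℓ'_i = f_{σ(i)}(g'_{i1},…,g'_{im_{σ(i)}})`. -/
def rhs : Set L := hsumSet H.add (fun i => H.evalBExpr (d.f (d.σ i)) (d.g' i))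

end SData

/-- The relation `𝒮ₙ` on a Lie hyperalgebra. -/
def SRel (n : ℕ) (x y : L) : Prop := ∃ d : SData H n, x ∈ d.lhs ∧ y ∈ d.rhs

/-- Data for the relation `𝒜` (no restriction on the permutations `σᵢ`). -/
structure AData (F L : Type*) where
  t : ℕ
  σ : Equiv.Perm (Fin (t + 1))
  m : Fin (t + 1) → ℕ
  f : ∀ i, BExpr (m i + 1)
  h : ∀ i, Fin (m i + 1) → L
  p : ∀ i, Fin (m i + 1) → ℕ
  q : ∀ i j, Fin (p i j + 1) → ℕ
  lam : ∀ i j k, Fin (q i j k + 1) → F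
  σi : ∀ i, Equiv.Perm (Fin (m i + 1))
  σij : ∀ i j, Equiv.Perm (Fin (p i j + 1))
  σijk : ∀ i j k, Equiv.Perm (Fin (q i j k + 1))

variable {H}

def aG (d : AData F L) (i : Fin (d.t + 1)) (j : Fin (d.m i + 1)) : Set L :=
  ⋃ c ∈ hsumSet H.fadd (fun k => hprod H.fmul (d.lam i j k)), H.smul c (d.h i j)

def aA (d : AData F L) (i : Fin (d.t + 1)) (j : Fin (d.m i + 1)) : Set F :=
  hsumSet H.fadd (fun k =>
    hprod H.fmul (fun r => d.lam i j (d.σij i j k) (d.σijk i j (d.σij i j k) r)))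

def aG' (d : AData F L) (i : Fin (d.t + 1)) (j : Fin (d.m (d.σ i) + 1)) : Set L :=
  ⋃ c ∈ aA (H := H) d (d.σ i) (d.σi (d.σ i) j), H.smul c (d.h (d.σ i) (d.σi (d.σ i) j))

def aLhs (d : AData F L) : Set L :=
  hsumSet H.add (fun i => H.evalBExpr (d.f i) (aG (H := H) d i))

def aRhs (d : AData F L) : Set L :=
  hsumSet H.add (fun i => H.evalBExpr (d.f (d.σ i)) (aG' (H := H) d i))

variable (H)

/-- The relation `𝒜` on a Lie hyperalgebra. -/
def ARel (x y : L) : Prop :=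
  ∃ d : AData F L, x ∈ aLhs (H := H) d ∧ y ∈ aRhs (H := H) d

/-- Data for the fundamental relation `ℒ`. -/
structure LData (F L : Type*) where
  t : ℕ
  m : Fin (t + 1) → ℕ
  f : ∀ i, BExpr (m i + 1)
  h : ∀ i, Fin (m i + 1) → L
  p : ∀ i, Fin (m i + 1) → ℕ
  q : ∀ i j, Fin (p i j + 1) → ℕ
  lam : ∀ i j k, Fin (q i j k + 1) → F

variable {H}

def lG (d : LData F L) (i : Fin (d.t + 1)) (j : Fin (d.m i + 1)) : Set L :=
  ⋃ c ∈ hsumSet H.fadd (fun k => hprod H.fmul (d.lam i j k)), H.smul c (d.h i j)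

def lLhs (d : LData F L) : Set L :=
  hsumSet H.add (fun i => H.evalBExpr (d.f i) (lG (H := H) d i))

variable (H)

/-- The fundamental relation `ℒ`: `x ℒ y` iff `{x,y} ⊆ Σ ℓᵢ`. -/
def LRel (x y : L) : Prop := ∃ d : LData F L, x ∈ lLhs (H := H) d ∧ y ∈ lLhs (H := H) d

/-- Data for the relation `α` on the hyperfield `F`. -/
structure AlphaData (F : Type*) where
  t : ℕ
  σ : Equiv.Perm (Fin (t + 1))
  k : Fin (t + 1) → ℕ
  σi : ∀ i, Equiv.Perm (Fin (k i + 1))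
  xs : ∀ i, Fin (k i + 1) → F

/-- The relation `α` on the hyperfield `F`. -/
def alphaRel (a b : F) : Prop :=
  ∃ d : AlphaData F,
    a ∈ hsumSet H.fadd (fun i => hprod H.fmul (d.xs i)) ∧
    b ∈ hsumSet H.fadd (fun i => hprod H.fmul (fun j => d.xs (d.σ i) (d.σi (d.σ i) j)))

/-- `A ρ̄̄ B` : every element of `A` is related to every element of `B`. -/
def SetRel {α : Type*} (ρ : α → α → Prop) (A B : Set α) : Prop :=
  ∀ a ∈ A, ∀ b ∈ B, ρ a b

/-- A strongly regular relation on a Lie hyperalgebra. -/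
structure IsStronglyRegular (ρ : L → L → Prop) : Prop where
  add_left : ∀ x y a, ρ x y → SetRel ρ (H.add a x) (H.add a y)
  add_right : ∀ x y a, ρ x y → SetRel ρ (H.add x a) (H.add y a)
  smul : ∀ x y (c : F), ρ x y → SetRel ρ (H.smul c x) (H.smul c y)
  bracket_left : ∀ x y a, ρ x y → SetRel ρ (H.bracket a x) (H.bracket a y)
  bracket_right : ∀ x y a, ρ x y → SetRel ρ (H.bracket x a) (H.bracket y a)

/-- A strongly regular relation on the hyperfield `F`. -/
structure IsStronglyRegularF (δ : F → F → Prop) : Prop where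
  add_left : ∀ x y a, δ x y → SetRel δ (H.fadd a x) (H.fadd a y)
  add_right : ∀ x y a, δ x y → SetRel δ (H.fadd x a) (H.fadd y a)
  mul_left : ∀ x y a, δ x y → SetRel δ (H.fmul a x) (H.fmul a y)
  mul_right : ∀ x y a, δ x y → SetRel δ (H.fmul x a) (H.fmul y a)

end LieHyperalgebra

/-!
The derived series of a Lie algebra depends only on its additive structure: since
`c • ⁅x, y⁆ = ⁅x, c • y⁆`, the ideal `D⁽ᵏ⁺¹⁾ = ⁅D⁽ᵏ⁾, D⁽ᵏ⁾⁆` is the additive closure of the brackets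
of elements of `D⁽ᵏ⁾`. For the same reason `span ⁅S, S⁆` is the additive closure of the brackets of
elements of `span S`, for any module structure in which the bracket is bilinear. The module
structure on `L/𝒮ₙ*` in the statement is one (by `bracket_bilin_left`), although it need not be
the one underlying the Lie algebra structure. As the class map sends hyperbrackets onto brackets,
induction on `i` shows that `D⁽ⁱ⁾` and `span (𝒮ₙ*(L^{[i]}))` are the same set.
-/

section LieBracketSpan

open Submodule Pointwise

variable {R M : Type*}

theorem coe_span_eq_closure_of_smul_mem [Semiring R] [AddCommMonoid M] [Module R M] {s : Set M}
    (hs : ∀ (c : R), ∀ x ∈ s, c • x ∈ s) :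
    (span R s : Set M) = AddSubmonoid.closure s := by
  have huniv : (Set.univ : Set R) • s = s :=
    subset_antisymm (by rintro _ ⟨c, -, x, hx, rfl⟩; exact hs c x hx)
      fun x hx => ⟨1, trivial, x, hx, one_smul R x⟩
  have h := congrArg SetLike.coe (span_eq_closure (R := R) (s := s))
  rwa [huniv] at h

variable [CommRing R] [LieRing M] [Module R M]
  (hsmul_lie : ∀ (c : R) (u v : M), ⁅c • u, v⁆ = c • ⁅u, v⁆)
include hsmul_lie

theorem lie_smul_of_smul_lie (c : R) (u v : M) : ⁅u, c • v⁆ = c • ⁅u, v⁆ := by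
  rw [← lie_skew, hsmul_lie, ← smul_neg, lie_skew]

def lieBilin : M →ₗ[R] M →ₗ[R] M :=
  LinearMap.mk₂ R (⁅·, ·⁆) add_lie hsmul_lie lie_add (lie_smul_of_smul_lie hsmul_lie)

theorem span_image2_lie_span (s t : Set M) :
    span R (Set.image2 (⁅·, ·⁆) (span R s : Set M) (span R t : Set M)) =
      span R (Set.image2 (⁅·, ·⁆) s t) :=
  (map₂_eq_span_image2 (lieBilin hsmul_lie) _ _).symm.trans (map₂_span_span R _ s t)

theorem coe_span_image2_lie (s t : Set M) :
    (span R (Set.image2 (⁅·, ·⁆) s t) : Set M) =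
      (AddSubmonoid.closure
        (Set.image2 (⁅·, ·⁆) (span R s : Set M) (span R t : Set M)) : Set M) := by
  rw [← span_image2_lie_span hsmul_lie]
  refine coe_span_eq_closure_of_smul_mem ?_
  rintro c _ ⟨x, hx, y, hy, rfl⟩
  exact ⟨x, hx, c • y, smul_mem _ c hy, lie_smul_of_smul_lie hsmul_lie c x y⟩

end LieBracketSpan

theorem LieSubmodule.coe_lieIdeal_oper_eq_closure {R L M : Type*} [CommRing R] [LieRing L]
    [LieAlgebra R L] [AddCommGroup M] [Module R M] [LieRingModule L M] [LieModule R L M]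
    (I : LieIdeal R L) (N : LieSubmodule R L M) :
    ((⁅I, N⁆ : LieSubmodule R L M) : Set M) =
      (AddSubmonoid.closure (Set.image2 (⁅·, ·⁆) (I : Set L) (N : Set M)) : Set M) := by
  rw [← LieSubmodule.coe_toSubmodule, lieIdeal_oper_eq_linear_span']
  refine coe_span_eq_closure_of_smul_mem ?_
  rintro c _ ⟨x, hx, n, hn, rfl⟩
  exact ⟨x, hx, c • n, N.smul_mem c hn, lie_smul c x n⟩

theorem LieAlgebra.coe_derivedSeries_succ (R L : Type*) [CommRing R] [LieRing L]
    [LieAlgebra R L] (k : ℕ) :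
    (derivedSeries R L (k + 1) : Set L) =
      (AddSubmonoid.closure (Set.image2 (⁅·, ·⁆) (derivedSeries R L k : Set L)
        (derivedSeries R L k : Set L)) : Set L) := by
  rw [derivedSeries_def, derivedSeries_def, derivedSeriesOfIdeal_succ]
  exact LieSubmodule.coe_lieIdeal_oper_eq_closure _ _

theorem IsHypergroup.exists_mem {α : Type*} {f : α → α → Set α} (hf : IsHypergroup f)
    (a c : α) : ∃ b, c ∈ f a b :=
  Set.mem_iUnion.mp ((hf.2 a).1 ▸ Set.mem_univ c)

namespace LieHyperalgebra

variable {F L : Type*} (H : LieHyperalgebra F L)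

theorem smul_nonempty (a : F) (x : L) : (H.smul a x).Nonempty := by
  obtain ⟨b, hb⟩ := H.fadd_hypergroup.exists_mem a H.fone
  have hx : x ∈ ⋃ c ∈ H.fadd a b, H.smul c x := Set.mem_biUnion hb (by simp [H.one_smul])
  rw [H.add_smul] at hx
  simp only [ext2, Set.mem_iUnion] at hx
  obtain ⟨y, hy, -⟩ := hx
  exact ⟨y, hy⟩

theorem bracket_nonempty (a b : L) : (H.bracket a b).Nonempty := by
  obtain ⟨y, hy⟩ := H.add_hypergroup.exists_mem a b
  have hzero : H.zero ∈ ext2 H.bracket (ext2 H.add (H.smul H.fone a) (H.smul H.fone y)) {b} := by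
    simp only [H.one_smul, ext2, Set.mem_iUnion]
    exact ⟨b, ⟨a, rfl, y, rfl, hy⟩, b, rfl, H.bracket_refl b⟩
  rw [H.bracket_bilin_left] at hzero
  simp only [ext2, Set.mem_iUnion] at hzero
  obtain ⟨-, ⟨z, hz, -⟩, -⟩ := hzero
  exact ⟨z, hz⟩

variable {K Q : Type*} {πK : F → K} {π : L → Q}

theorem image_ext2_bracket [Bracket Q Q]
    (hbracket : ∀ x y : L, ∀ z ∈ H.bracket x y, ⁅π x, π y⁆ = π z) (A B : Set L) :
    π '' ext2 H.bracket A B = Set.image2 (⁅·, ·⁆) (π '' A) (π '' B) := by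
  ext q
  simp only [ext2, Set.mem_image, Set.mem_iUnion, Set.mem_image2]
  constructor
  · rintro ⟨z, ⟨a, ha, b, hb, hz⟩, rfl⟩
    exact ⟨π a, ⟨a, ha, rfl⟩, π b, ⟨b, hb, rfl⟩, hbracket a b z hz⟩
  · rintro ⟨-, ⟨a, ha, rfl⟩, -, ⟨b, hb, rfl⟩, rfl⟩
    obtain ⟨z, hz⟩ := H.bracket_nonempty a b
    exact ⟨z, ⟨a, ha, b, hb, hz⟩, (hbracket a b z hz).symm⟩

section Compatible

variable [Semiring K] [AddCommGroup Q] [Module K Q]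
  (hadd : ∀ x y : L, ∀ z ∈ H.add x y, π x + π y = π z)
  (hsmul : ∀ (a : F) (x : L), ∀ z ∈ H.smul a x, πK a • π x = π z)

include hadd hsmul

theorem map_zero_eq_zero : π H.zero = 0 := by
  obtain ⟨z, hz⟩ := H.add_hypergroup.1.1 H.zero H.zero
  have hfzero : ∀ x, πK H.fzero • π x = π H.zero :=
    fun x => hsmul _ x _ (by rw [H.zero_smul]; rfl)
  have h : π H.zero = π H.zero + π H.zero :=
    calc π H.zero = πK H.fzero • π z := (hfzero z).symm
      _ = πK H.fzero • (π H.zero + π H.zero) := by rw [hadd _ _ z hz]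
      _ = π H.zero + π H.zero := by rw [_root_.smul_add, hfzero]
  exact left_eq_add.mp h

theorem map_eq_of_mem_add_zero {x z : L} (hz : z ∈ H.add x H.zero) : π z = π x := by
  rw [← hadd x H.zero z hz, H.map_zero_eq_zero hadd hsmul, add_zero]

end Compatible

theorem smul_lie_of_surjective [Semiring K] [LieRing Q] [Module K Q]
    (hK : Function.Surjective πK) (hQ : Function.Surjective π)
    (hadd : ∀ x y : L, ∀ z ∈ H.add x y, π x + π y = π z)
    (hsmul : ∀ (a : F) (x : L), ∀ z ∈ H.smul a x, πK a • π x = π z)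
    (hbracket : ∀ x y : L, ∀ z ∈ H.bracket x y, ⁅π x, π y⁆ = π z)
    (c : K) (u v : Q) : ⁅c • u, v⁆ = c • ⁅u, v⁆ := by
  obtain ⟨l, rfl⟩ := hK c
  obtain ⟨a, rfl⟩ := hQ u
  obtain ⟨b, rfl⟩ := hQ v
  obtain ⟨w, hw⟩ := H.smul_nonempty l a
  obtain ⟨u, hu⟩ := H.add_hypergroup.1.1 w H.zero
  obtain ⟨z, hz⟩ := H.bracket_nonempty u b
  -- `z ∈ ⁅l·a + 0·a, b⁆ = l·⁅a, b⁆ + 0·⁅a, b⁆`, and adding `0 = H.zero` does not change classes.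
  have hmem : z ∈ ext2 H.bracket (ext2 H.add (H.smul l a) (H.smul H.fzero a)) {b} := by
    simp only [H.zero_smul, ext2, Set.mem_iUnion]
    exact ⟨u, ⟨w, hw, H.zero, rfl, hu⟩, b, rfl, hz⟩
  rw [H.bracket_bilin_left] at hmem
  simp only [H.zero_smul, ext2, Set.mem_iUnion, Set.mem_singleton_iff] at hmem
  obtain ⟨p, ⟨c, hc, hp⟩, -, ⟨-, -, rfl⟩, hzp⟩ := hmem
  calc ⁅πK l • π a, π b⁆ = ⁅π u, π b⁆ := by
        rw [hsmul l a w hw, H.map_eq_of_mem_add_zero hadd hsmul hu]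
    _ = π z := hbracket u b z hz
    _ = π p := H.map_eq_of_mem_add_zero hadd hsmul hzp
    _ = πK l • π c := (hsmul l c p hp).symm
    _ = πK l • ⁅π a, π b⁆ := by rw [hbracket a b c hc]

end LieHyperalgebra

theorem LieHyperalgebra.derivedSeries_quotient_eq_span_general {F L : Type*}
    (H : LieHyperalgebra F L) (n : ℕ)
    [fQ : Field (Quot (Relation.TransGen H.alphaRel))]
    [lieRing : LieRing (Quot (Relation.TransGen (H.SRel n)))]
    [module : Module (Quot (Relation.TransGen H.alphaRel))
      (Quot (Relation.TransGen (H.SRel n)))]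
    [lieAlg : LieAlgebra (Quot (Relation.TransGen H.alphaRel))
      (Quot (Relation.TransGen (H.SRel n)))]
    (hadd : ∀ x y : L, ∀ z ∈ H.add x y,
      Quot.mk (Relation.TransGen (H.SRel n)) x + Quot.mk (Relation.TransGen (H.SRel n)) y
        = Quot.mk (Relation.TransGen (H.SRel n)) z)
    (hsmul : ∀ (a : F) (x : L), ∀ z ∈ H.smul a x,
      Quot.mk (Relation.TransGen H.alphaRel) a • Quot.mk (Relation.TransGen (H.SRel n)) x
        = Quot.mk (Relation.TransGen (H.SRel n)) z)
    (hbracket : ∀ x y : L, ∀ z ∈ H.bracket x y,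
      ⁅Quot.mk (Relation.TransGen (H.SRel n)) x, Quot.mk (Relation.TransGen (H.SRel n)) y⁆
        = Quot.mk (Relation.TransGen (H.SRel n)) z)
 :
    ∀ i : ℕ,
      (LieAlgebra.derivedSeries (Quot (Relation.TransGen H.alphaRel))
          (Quot (Relation.TransGen (H.SRel n))) i : Set (Quot (Relation.TransGen (H.SRel n))))
        = (Submodule.span (Quot (Relation.TransGen H.alphaRel))
            (Quot.mk (Relation.TransGen (H.SRel n)) '' H.derivedSet i) :
              Submodule (Quot (Relation.TransGen H.alphaRel))
                (Quot (Relation.TransGen (H.SRel n)))) := by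
  intro i
  induction i with
  | zero =>
    rw [LieAlgebra.derivedSeries_def, LieAlgebra.derivedSeriesOfIdeal_zero, derivedSet,
      Set.image_univ_of_surjective Quot.mk_surjective, Submodule.span_univ]
    rfl
  | succ i ih =>
    have hsmul_lie := H.smul_lie_of_surjective Quot.mk_surjective Quot.mk_surjective
      hadd hsmul hbracket
    rw [LieAlgebra.coe_derivedSeries_succ, ih, ← coe_span_image2_lie hsmul_lie, derivedSet,
      H.image_ext2_bracket hbracket]

/-- For a Lie hyperalgebra `L` over a hyperfield `F` (with `char(F/α*) ≠ 2`) and `n ≥ 1`,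
the `i`-th derived subalgebra of the quotient Lie algebra `L/𝒮ₙ*` is spanned by the
classes of the elements of `L^{[i]}`:
`(L/𝒮ₙ*)^{(i)} = ⟨𝒮ₙ*(h) : h ∈ L^{[i]}⟩` for all `i ≥ 0`. -/
theorem LieHyperalgebra.derivedSeries_quotient_eq_span {F L : Type*}
    (H : LieHyperalgebra F L) (n : ℕ) (hn : 1 ≤ n)
    [fQ : Field (Quot (Relation.TransGen H.alphaRel))]
    (hfadd : ∀ a b : F, ∀ c ∈ H.fadd a b,
      Quot.mk (Relation.TransGen H.alphaRel) a + Quot.mk (Relation.TransGen H.alphaRel) b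
        = Quot.mk (Relation.TransGen H.alphaRel) c)
    (hfmul : ∀ a b : F, ∀ c ∈ H.fmul a b,
      Quot.mk (Relation.TransGen H.alphaRel) a * Quot.mk (Relation.TransGen H.alphaRel) b
        = Quot.mk (Relation.TransGen H.alphaRel) c)
    (hchar : (2 : Quot (Relation.TransGen H.alphaRel)) ≠ 0)
    [lieRing : LieRing (Quot (Relation.TransGen (H.SRel n)))]
    [module : Module (Quot (Relation.TransGen H.alphaRel))
      (Quot (Relation.TransGen (H.SRel n)))]
    [lieAlg : LieAlgebra (Quot (Relation.TransGen H.alphaRel))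
      (Quot (Relation.TransGen (H.SRel n)))]
    (hadd : ∀ x y : L, ∀ z ∈ H.add x y,
      Quot.mk (Relation.TransGen (H.SRel n)) x + Quot.mk (Relation.TransGen (H.SRel n)) y
        = Quot.mk (Relation.TransGen (H.SRel n)) z)
    (hsmul : ∀ (a : F) (x : L), ∀ z ∈ H.smul a x,
      Quot.mk (Relation.TransGen H.alphaRel) a • Quot.mk (Relation.TransGen (H.SRel n)) x
        = Quot.mk (Relation.TransGen (H.SRel n)) z)
    (hbracket : ∀ x y : L, ∀ z ∈ H.bracket x y,
      ⁅Quot.mk (Relation.TransGen (H.SRel n)) x, Quot.mk (Relation.TransGen (H.SRel n)) y⁆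
        = Quot.mk (Relation.TransGen (H.SRel n)) z)
 :
    ∀ i : ℕ,
      (LieAlgebra.derivedSeries (Quot (Relation.TransGen H.alphaRel))
          (Quot (Relation.TransGen (H.SRel n))) i : Set (Quot (Relation.TransGen (H.SRel n))))
        = (Submodule.span (Quot (Relation.TransGen H.alphaRel))
            (Quot.mk (Relation.TransGen (H.SRel n)) '' H.derivedSet i) :
              Submodule (Quot (Relation.TransGen H.alphaRel))
                (Quot (Relation.TransGen (H.SRel n)))) :=
  LieHyperalgebra.derivedSeries_quotient_eq_span_general H n (fQ := fQ) (lieRing := lieRing)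
    (module := module) (lieAlg := lieAlg) hadd hsmul hbracket
end

section
/- Let L be a Lie hyperalgebra over a hyperfield F with char(F/α*) ≠ 2. For any x, y ∈ L with x, y ∈ L^{[n-1]}, the classes commute in the quotient: ⌊S_n*(x), S_n*(y)⌋ = ⌊S_n*(y), S_n*(x)⌋ in L/S_n*. Consequently (L/S_n*)^{(n-1)} is abelian. -/
/-!
Exchanging the two arguments of a single bracket `⌊x, y⌋` with `x, y ∈ L^{[n-1]}` is one of the
rearrangements allowed in `𝒮ₙ`, so every element of `⌊x, y⌋` is `𝒮ₙ`-related to every element of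
`⌊y, x⌋` and the classes of `x` and `y` commute in `L/𝒮ₙ*`. In a Lie algebra over a field of
characteristic `≠ 2` commuting elements have zero bracket. The `(n-1)`-th derived ideal of
`L/𝒮ₙ*` lies in the span of the classes of `L^{[n-1]}`, so by bilinearity it is abelian.
-/

open Submodule

theorem mem_ext2 {α : Type*} {f : α → α → Set α} {A B : Set α} {a b c : α}
    (ha : a ∈ A) (hb : b ∈ B) (hc : c ∈ f a b) : c ∈ ext2 f A B :=
  Set.mem_biUnion ha (Set.mem_biUnion hb hc)

theorem lie_eq_zero_of_lie_comm {K L : Type*} [Field K] [LieRing L] [LieAlgebra K L]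
    (h2 : (2 : K) ≠ 0) {a b : L} (h : ⁅a, b⁆ = ⁅b, a⁆) : ⁅a, b⁆ = 0 := by
  have h2ab : (2 : K) • ⁅a, b⁆ = 0 := by
    rw [two_smul]
    nth_rw 2 [h]
    rw [← lie_skew a b, neg_add_cancel]
  exact (smul_eq_zero.mp h2ab).resolve_left h2

theorem Submodule.lie_mem_of_mem_span {R L M : Type*} [CommRing R] [LieRing L] [LieAlgebra R L]
    [AddCommGroup M] [Module R M] [LieRingModule L M] [LieModule R L M]
    {s : Set L} {t : Set M} {P : Submodule R M} (h : ∀ a ∈ s, ∀ b ∈ t, ⁅a, b⁆ ∈ P)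
    {u : L} {v : M} (hu : u ∈ span R s) (hv : v ∈ span R t) : ⁅u, v⁆ ∈ P := by
  have huv := apply_mem_map₂ (LieModule.toEnd R L M : L →ₗ[R] Module.End R M) hu hv
  rw [map₂_span_span] at huv
  refine span_le.mpr ?_ huv
  rintro _ ⟨a, ha, b, hb, rfl⟩
  exact h a ha b hb

theorem LieAlgebra.derivedSeries_le_span {R L : Type*} [CommRing R] [LieRing L] [LieAlgebra R L]
    (S : ℕ → Set L) (h0 : span R (S 0) = ⊤) (hS : ∀ k, ∀ a ∈ S k, ∀ b ∈ S k, ⁅a, b⁆ ∈ S (k + 1))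
    (k : ℕ) {u : L} (hu : u ∈ derivedSeries R L k) : u ∈ span R (S k) := by
  induction k generalizing u with
  | zero => simp [h0]
  | succ k ih =>
    rw [derivedSeries_def, derivedSeriesOfIdeal_succ, ← derivedSeries_def,
      ← LieSubmodule.mem_toSubmodule, LieSubmodule.lieIdeal_oper_eq_linear_span'] at hu
    refine span_le.mpr ?_ hu
    rintro _ ⟨x, hx, y, hy, rfl⟩
    exact lie_mem_of_mem_span (fun a ha b hb => subset_span (hS k a ha b hb)) (ih hx) (ih hy)

namespace LieHyperalgebra

variable {F L : Type*} (H : LieHyperalgebra F L)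

-- `0 ∈ ⌊y, y⌋ ⊆ ⌊x + w, y⌋ = ⌊x, y⌋ + ⌊w, y⌋` for any `w` with `y ∈ x + w`.
theorem bracket_nonempty_s10 (x y : L) : (H.bracket x y).Nonempty := by
  obtain ⟨w, hw⟩ : ∃ w, y ∈ H.add x w :=
    Set.mem_iUnion.mp (Set.eq_univ_iff_forall.mp (H.add_hypergroup.2 x).1 y)
  have hzero : H.zero ∈ ext2 H.bracket (ext2 H.add (H.smul H.fone x) (H.smul H.fone w)) {y} := by
    simp only [H.one_smul]
    exact mem_ext2 (mem_ext2 rfl rfl hw) rfl (H.bracket_refl y)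
  rw [H.bracket_bilin_left] at hzero
  simp only [ext2, H.one_smul, Set.biUnion_of_singleton, Set.mem_iUnion] at hzero
  obtain ⟨a, ha, -⟩ := hzero
  exact ⟨a, ha⟩

/-- The paper's witness `t = 1`, `f₁ = ⌊·, ·⌋`, `g₁₁ = x`, `g₁₂ = y`, `σ₁ = (1 2)`, with indices
shifted to start at `0`. -/
def swapData (n : ℕ) {x y : L} (hx : x ∈ H.derivedSet (n - 1)) (hy : y ∈ H.derivedSet (n - 1)) :
    H.SData n where
  t := 0
  σ := 1
  m := fun _ => 1
  f := fun _ => .br (.leaf 0) (.leaf 1)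
  h := fun _ => ![x, y]
  p := fun _ _ => 0
  q := fun _ _ _ => 0
  lam := fun _ _ _ _ => H.fone
  σi := fun _ => Equiv.swap 0 1
  σi_fix := fun _ j hj => absurd (by fin_cases j <;> assumption) hj
  σij := fun _ _ => 1
  σijk := fun _ _ _ => 1

theorem sRel_of_mem_bracket_of_mem_bracket_swap {n : ℕ} {x y u v : L}
    (hx : x ∈ H.derivedSet (n - 1)) (hy : y ∈ H.derivedSet (n - 1))
    (hu : u ∈ H.bracket x y) (hv : v ∈ H.bracket y x) : H.SRel n u v := by
  refine ⟨H.swapData n hx hy, ?_, ?_⟩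
  · simp only [SData.lhs, swapData, hsumSet, evalBExpr, SData.g, hprod, Set.biUnion_singleton,
      H.one_smul, ext2]
    simpa [Matrix.cons_val_zero, Matrix.cons_val_one] using hu
  · simp only [SData.rhs, swapData, hsumSet, evalBExpr, SData.g', SData.A, hprod,
      Set.biUnion_singleton, H.one_smul, ext2, Equiv.Perm.one_apply]
    simpa [Equiv.swap_apply_left, Equiv.swap_apply_right, Matrix.cons_val_zero,
      Matrix.cons_val_one] using hv

theorem lie_comm_of_mem_derivedSet {M : Type*} [LieRing M] {n : ℕ} {π : L → M}
    (hπ : ∀ u v, H.SRel n u v → π u = π v)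
    (hbracket : ∀ x y : L, ∀ z ∈ H.bracket x y, ⁅π x, π y⁆ = π z) {x y : L}
    (hx : x ∈ H.derivedSet (n - 1)) (hy : y ∈ H.derivedSet (n - 1)) :
    ⁅π x, π y⁆ = ⁅π y, π x⁆ := by
  obtain ⟨u, hu⟩ := H.bracket_nonempty_s10 x y
  obtain ⟨v, hv⟩ := H.bracket_nonempty_s10 y x
  rw [hbracket x y u hu, hbracket y x v hv]
  exact hπ u v (H.sRel_of_mem_bracket_of_mem_bracket_swap hx hy hu hv)

theorem derivedSeries_le_span_image_derivedSet {R M : Type*} [CommRing R] [LieRing M]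
    [LieAlgebra R M] {π : L → M} (hπ : Function.Surjective π)
    (hbracket : ∀ x y : L, ∀ z ∈ H.bracket x y, ⁅π x, π y⁆ = π z) (k : ℕ) {u : M}
    (hu : u ∈ LieAlgebra.derivedSeries R M k) : u ∈ span R (π '' H.derivedSet k) := by
  refine LieAlgebra.derivedSeries_le_span (fun k => π '' H.derivedSet k) ?_ ?_ k hu
  · rw [derivedSet, Set.image_univ_of_surjective hπ, span_univ]
  · rintro k _ ⟨x, hx, rfl⟩ _ ⟨y, hy, rfl⟩
    obtain ⟨z, hz⟩ := H.bracket_nonempty_s10 x y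
    exact ⟨z, mem_ext2 hx hy hz, (hbracket x y z hz).symm⟩

end LieHyperalgebra

theorem LieHyperalgebra.classes_commute_on_derivedSet_general {F L : Type*}
    (H : LieHyperalgebra F L) (n : ℕ)
    [fQ : Field (Quot (Relation.TransGen H.alphaRel))]
    (hchar : (2 : Quot (Relation.TransGen H.alphaRel)) ≠ 0)
    [lieRing : LieRing (Quot (Relation.TransGen (H.SRel n)))]
    [lieAlg : LieAlgebra (Quot (Relation.TransGen H.alphaRel))
      (Quot (Relation.TransGen (H.SRel n)))]
    (hbracket : ∀ x y : L, ∀ z ∈ H.bracket x y,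
      ⁅Quot.mk (Relation.TransGen (H.SRel n)) x, Quot.mk (Relation.TransGen (H.SRel n)) y⁆
        = Quot.mk (Relation.TransGen (H.SRel n)) z)
 :
    (∀ x ∈ H.derivedSet (n - 1), ∀ y ∈ H.derivedSet (n - 1),
      ⁅Quot.mk (Relation.TransGen (H.SRel n)) x, Quot.mk (Relation.TransGen (H.SRel n)) y⁆
        = ⁅Quot.mk (Relation.TransGen (H.SRel n)) y,
            Quot.mk (Relation.TransGen (H.SRel n)) x⁆) ∧
    (∀ u v : Quot (Relation.TransGen (H.SRel n)),
      u ∈ LieAlgebra.derivedSeries (Quot (Relation.TransGen H.alphaRel))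
            (Quot (Relation.TransGen (H.SRel n))) (n - 1) →
      v ∈ LieAlgebra.derivedSeries (Quot (Relation.TransGen H.alphaRel))
            (Quot (Relation.TransGen (H.SRel n))) (n - 1) →
      ⁅u, v⁆ = 0) := by
  have comm := fun x (hx : x ∈ H.derivedSet (n - 1)) y (hy : y ∈ H.derivedSet (n - 1)) =>
    H.lie_comm_of_mem_derivedSet (fun u v huv => Quot.sound (.single huv)) hbracket hx hy
  refine ⟨comm, fun u v hu hv => ?_⟩
  have hu' := H.derivedSeries_le_span_image_derivedSet Quot.mk_surjective hbracket (n - 1) hu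
  have hv' := H.derivedSeries_le_span_image_derivedSet Quot.mk_surjective hbracket (n - 1) hv
  refine (mem_bot _).mp (lie_mem_of_mem_span ?_ hu' hv')
  rintro _ ⟨x, hx, rfl⟩ _ ⟨y, hy, rfl⟩
  exact (mem_bot _).mpr (lie_eq_zero_of_lie_comm hchar (comm x hx y hy))

/-- For a Lie hyperalgebra `L` over a hyperfield `F` with `char(F/α*) ≠ 2`: for any
`x, y ∈ L^{[n-1]}` the classes commute in the quotient,
`⌊𝒮ₙ*(x), 𝒮ₙ*(y)⌋ = ⌊𝒮ₙ*(y), 𝒮ₙ*(x)⌋`, and consequently `(L/𝒮ₙ*)^{(n-1)}` is abelian. -/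
theorem LieHyperalgebra.classes_commute_on_derivedSet {F L : Type*}
    (H : LieHyperalgebra F L) (n : ℕ) (hn : 1 ≤ n)
    [fQ : Field (Quot (Relation.TransGen H.alphaRel))]
    (hfadd : ∀ a b : F, ∀ c ∈ H.fadd a b,
      Quot.mk (Relation.TransGen H.alphaRel) a + Quot.mk (Relation.TransGen H.alphaRel) b
        = Quot.mk (Relation.TransGen H.alphaRel) c)
    (hfmul : ∀ a b : F, ∀ c ∈ H.fmul a b,
      Quot.mk (Relation.TransGen H.alphaRel) a * Quot.mk (Relation.TransGen H.alphaRel) b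
        = Quot.mk (Relation.TransGen H.alphaRel) c)
    (hchar : (2 : Quot (Relation.TransGen H.alphaRel)) ≠ 0)
    [lieRing : LieRing (Quot (Relation.TransGen (H.SRel n)))]
    [module : Module (Quot (Relation.TransGen H.alphaRel))
      (Quot (Relation.TransGen (H.SRel n)))]
    [lieAlg : LieAlgebra (Quot (Relation.TransGen H.alphaRel))
      (Quot (Relation.TransGen (H.SRel n)))]
    (hadd : ∀ x y : L, ∀ z ∈ H.add x y,
      Quot.mk (Relation.TransGen (H.SRel n)) x + Quot.mk (Relation.TransGen (H.SRel n)) y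
        = Quot.mk (Relation.TransGen (H.SRel n)) z)
    (hsmul : ∀ (a : F) (x : L), ∀ z ∈ H.smul a x,
      Quot.mk (Relation.TransGen H.alphaRel) a • Quot.mk (Relation.TransGen (H.SRel n)) x
        = Quot.mk (Relation.TransGen (H.SRel n)) z)
    (hbracket : ∀ x y : L, ∀ z ∈ H.bracket x y,
      ⁅Quot.mk (Relation.TransGen (H.SRel n)) x, Quot.mk (Relation.TransGen (H.SRel n)) y⁆
        = Quot.mk (Relation.TransGen (H.SRel n)) z)
 :
    (∀ x ∈ H.derivedSet (n - 1), ∀ y ∈ H.derivedSet (n - 1),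
      ⁅Quot.mk (Relation.TransGen (H.SRel n)) x, Quot.mk (Relation.TransGen (H.SRel n)) y⁆
        = ⁅Quot.mk (Relation.TransGen (H.SRel n)) y,
            Quot.mk (Relation.TransGen (H.SRel n)) x⁆) ∧
    (∀ u v : Quot (Relation.TransGen (H.SRel n)),
      u ∈ LieAlgebra.derivedSeries (Quot (Relation.TransGen H.alphaRel))
            (Quot (Relation.TransGen (H.SRel n))) (n - 1) →
      v ∈ LieAlgebra.derivedSeries (Quot (Relation.TransGen H.alphaRel))
            (Quot (Relation.TransGen (H.SRel n))) (n - 1) →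
      ⁅u, v⁆ = 0) :=
  LieHyperalgebra.classes_commute_on_derivedSet_general H n (fQ := fQ) hchar (lieRing := lieRing)
    (lieAlg := lieAlg) hbracket
end
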